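/- For every real x ≥ 1, consider the triangle in ℝ² with vertices (0,0), (1,0) and (x,2). Its area equals 1, its longest side has length √(x² + 4), each of its three heights is at least 2/√(x² + 4), and the ratio of its longest side length to its smallest height equals (x² + 4)/2, which is at most 3·x². -/

import Mathlib

/-- The unsigned area of a triangle in the Euclidean plane:
`½ · |det(Q - P, R - P)|`. -/
noncomputable def triangleArea (P Q R : EuclideanSpace ℝ (Fin 2)) : ℝ :=
  |((Q - P) 0) * ((R - P) 1) - ((Q - P) 1) * ((R - P) 0)| / 2

/-- The height of the triangle `P Q R` from the vertex `R` : the distance from `R`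
to the line through `P` and `Q`. -/
noncomputable def triangleHeight (P Q R : EuclideanSpace ℝ (Fin 2)) : ℝ :=
  Metric.infDist R (affineSpan ℝ {P, Q} : Set (EuclideanSpace ℝ (Fin 2)))

lemma line_lb (A B C : EuclideanSpace ℝ (Fin 2)) (n0 n1 d : ℝ)
    (hd : 0 ≤ d) (hn : 0 < n0 ^ 2 + n1 ^ 2)
    (hperp : n0 * (B 0 - A 0) + n1 * (B 1 - A 1) = 0)
    (hval : d ^ 2 * (n0 ^ 2 + n1 ^ 2) ≤ (n0 * (C 0 - A 0) + n1 * (C 1 - A 1)) ^ 2) :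
    d ≤ Metric.infDist C (affineSpan ℝ {A, B} : Set (EuclideanSpace ℝ (Fin 2))) := by
  have key : ∀ y ∈ (affineSpan ℝ {A, B} : Set (EuclideanSpace ℝ (Fin 2))), d ≤ dist C y := by
    intro y hy
    have hy' : (y - A) +ᵥ A ∈ affineSpan ℝ {A, B} := by simpa using hy
    obtain ⟨r, hr⟩ := vadd_left_mem_affineSpan_pair.mp hy'
    have h0 : r * (B 0 - A 0) = y 0 - A 0 := by simpa using congrArg (fun v => v 0) hr
    have h1 : r * (B 1 - A 1) = y 1 - A 1 := by simpa using congrArg (fun v => v 1) hr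
    have hdist : dist C y = Real.sqrt ((C 0 - y 0) ^ 2 + (C 1 - y 1) ^ 2) := by
      simp [EuclideanSpace.dist_eq, Fin.sum_univ_two, Real.dist_eq, sq_abs]
    rw [hdist, ← Real.sqrt_sq hd, Real.sqrt_le_sqrt_iff (by positivity)]
    have cauchy : (n0 * (C 0 - y 0) + n1 * (C 1 - y 1)) ^ 2 ≤
        (n0 ^ 2 + n1 ^ 2) * ((C 0 - y 0) ^ 2 + (C 1 - y 1) ^ 2) := by
      nlinarith [sq_nonneg (n0 * (C 1 - y 1) - n1 * (C 0 - y 0))]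
    have hconst : n0 * (C 0 - y 0) + n1 * (C 1 - y 1) = n0 * (C 0 - A 0) + n1 * (C 1 - A 1) := by
      linear_combination n0 * h0 + n1 * h1 - r * hperp
    rw [hconst] at cauchy
    nlinarith [cauchy, hval, hn]
  by_contra h
  push_neg at h
  obtain ⟨y, hy, hlt⟩ := (Metric.infDist_lt_iff ⟨A, subset_affineSpan ℝ _ (by simp)⟩).mp h
  exact absurd hlt (not_lt.mpr (key y hy))

set_option maxHeartbeats 1000000 in
theorem stmt5 (x : ℝ) (hx : 1 ≤ x) :
    let P : EuclideanSpace ℝ (Fin 2) := !₂[0, 0]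
    let Q : EuclideanSpace ℝ (Fin 2) := !₂[1, 0]
    let R : EuclideanSpace ℝ (Fin 2) := !₂[x, 2]
    triangleArea P Q R = 1 ∧
    max (dist P Q) (max (dist Q R) (dist P R)) = Real.sqrt (x ^ 2 + 4) ∧
    (2 / Real.sqrt (x ^ 2 + 4) ≤ triangleHeight Q R P ∧
      2 / Real.sqrt (x ^ 2 + 4) ≤ triangleHeight R P Q ∧
      2 / Real.sqrt (x ^ 2 + 4) ≤ triangleHeight P Q R) ∧
    max (dist P Q) (max (dist Q R) (dist P R)) /
        min (triangleHeight Q R P) (min (triangleHeight R P Q) (triangleHeight P Q R))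
      = (x ^ 2 + 4) / 2 ∧
    (x ^ 2 + 4) / 2 ≤ 3 * x ^ 2 := by
  intro P Q R
  set s : ℝ := x ^ 2 + 4 with hs_def
  have hs1 : (1 : ℝ) ≤ s := by nlinarith
  have hs : (0 : ℝ) < s := by linarith
  have hsq : Real.sqrt s ^ 2 = s := Real.sq_sqrt hs.le
  have hspos : 0 < Real.sqrt s := Real.sqrt_pos.mpr hs
  have hs1' : (1 : ℝ) ≤ Real.sqrt s := by nlinarith [hsq, hspos]
  set d : ℝ := 2 / Real.sqrt s with hd_def
  have hd : 0 ≤ d := by positivity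
  have hd2 : d ^ 2 = 4 / s := by rw [hd_def, div_pow, hsq]; norm_num
  -- coordinates
  have hP0 : P 0 = 0 := rfl
  have hP1 : P 1 = 0 := rfl
  have hQ0 : Q 0 = 1 := rfl
  have hQ1 : Q 1 = 0 := rfl
  have hR0 : R 0 = x := rfl
  have hR1 : R 1 = 2 := rfl
  -- distances
  have dPQ : dist P Q = 1 := by
    simp [P, Q, EuclideanSpace.dist_eq, Fin.sum_univ_two, Real.dist_eq]
  have dQR : dist Q R = Real.sqrt ((1 - x) ^ 2 + 4) := by
    simp [Q, R, EuclideanSpace.dist_eq, Fin.sum_univ_two, Real.dist_eq, sq_abs]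
    ring_nf
  have dPR : dist P R = Real.sqrt s := by
    simp [P, R, EuclideanSpace.dist_eq, Fin.sum_univ_two, Real.dist_eq, sq_abs, hs_def]
    ring_nf
  have hmax : max (dist P Q) (max (dist Q R) (dist P R)) = Real.sqrt s := by
    rw [dPQ, dQR, dPR]
    rw [max_eq_right (Real.sqrt_le_sqrt (by nlinarith))]
    rw [max_eq_right hs1']
  -- heights lower bounds
  have h1lb : d ≤ triangleHeight Q R P := by
    apply line_lb Q R P 2 (1 - x) d hd (by positivity)
    · rw [hQ0, hQ1, hR0, hR1]; ring
    · rw [hQ0, hQ1, hP0, hP1, hd2]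
      have : (2 * (0 - 1) + (1 - x) * (0 - 0)) ^ 2 = 4 := by ring
      rw [this]
      rw [div_mul_eq_mul_div, div_le_iff₀ hs]
      nlinarith
  have h3lb : d ≤ triangleHeight P Q R := by
    apply line_lb P Q R 0 1 d hd (by norm_num)
    · rw [hP0, hP1, hQ0, hQ1]; ring
    · rw [hP0, hP1, hR0, hR1, hd2]
      have : (0 * (x - 0) + 1 * (2 - 0)) ^ 2 = 4 := by ring
      rw [this]
      rw [div_mul_eq_mul_div, div_le_iff₀ hs]
      nlinarith
  have h2lb : d ≤ triangleHeight R P Q := by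
    apply line_lb R P Q 2 (-x) d hd (by positivity)
    · rw [hR0, hR1, hP0, hP1]; ring
    · rw [hR0, hR1, hQ0, hQ1, hd2]
      have h4 : (2 * (1 - x) + -x * (0 - 2)) ^ 2 = 4 := by ring
      rw [h4]
      rw [div_mul_eq_mul_div, div_le_iff₀ hs]
      nlinarith
  -- h2 exact value
  have h2eq : triangleHeight R P Q = d := by
    refine le_antisymm ?_ h2lb
    set t : ℝ := (s - x) / s with ht_def
    set F : EuclideanSpace ℝ (Fin 2) := t • (P - R) + R with hF_def
    have hFmem : F ∈ (affineSpan ℝ {R, P} : Set (EuclideanSpace ℝ (Fin 2))) := by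
      simpa [hF_def] using smul_vsub_vadd_mem_affineSpan_pair t R P
    have hF0 : F 0 = t * (P 0 - R 0) + R 0 := rfl
    have hF1 : F 1 = t * (P 1 - R 1) + R 1 := rfl
    have hdistQF : dist Q F = d := by
      have e0 : Q 0 - F 0 = 4 / s := by
        rw [hF0, hQ0, hP0, hR0, ht_def, hs_def]
        have h:(0:ℝ)<x^2+4 := by positivity
        field_simp
        ring
      have e1 : Q 1 - F 1 = -(2 * x) / s := by
        rw [hF1, hQ1, hP1, hR1, ht_def, hs_def]
        have h:(0:ℝ)<x^2+4 := by positivity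
        field_simp
        ring
      have : dist Q F = Real.sqrt ((Q 0 - F 0) ^ 2 + (Q 1 - F 1) ^ 2) := by
        simp [EuclideanSpace.dist_eq, Fin.sum_univ_two, Real.dist_eq, sq_abs]
      rw [this, e0, e1]
      have hsum : (4 / s) ^ 2 + (-(2 * x) / s) ^ 2 = 4 / s := by
        rw [hs_def]
        have h:(0:ℝ)<x^2+4 := by positivity
        field_simp
        ring
      rw [hsum, hd_def]
      rw [show (4 : ℝ) / s = (2 / Real.sqrt s) ^ 2 by rw [div_pow, hsq]; norm_num]
      exact Real.sqrt_sq (by positivity)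
    calc triangleHeight R P Q ≤ dist Q F := Metric.infDist_le_dist_of_mem hFmem
      _ = d := hdistQF
  -- min of heights
  have hmin : min (triangleHeight Q R P) (min (triangleHeight R P Q) (triangleHeight P Q R)) = d := by
    have inner : min (triangleHeight R P Q) (triangleHeight P Q R) = d := by
      rw [h2eq]; exact min_eq_left h3lb
    rw [inner]; exact min_eq_right h1lb
  refine ⟨?_, ?_, ⟨h1lb, h2lb, h3lb⟩, ?_, by rw [hs_def] at hs1 ⊢; nlinarith⟩
  · simp [triangleArea, P, Q, R]
  · exact hmax
  · rw [hmax, hmin, hd_def]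
    rw [div_div_eq_mul_div, Real.mul_self_sqrt hs.le]
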